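/- arXiv:1409.6652 — 3 statements merged into one kernel-verified Lean document; each statement's English description precedes it below -/
import Mathlib

section
/- Let α : [0, ℓ] → ℝⁿ be a unit-speed curve (|α'(t)| = 1 for all t) whose derivative α' is Lipschitz with constant Λ > 0. Then for all s, t ∈ [0, ℓ] with |s − t| ≤ 1/Λ one has |α(s) − α(t)| ≥ |s − t| − (Λ/2)|s − t|², and in particular |α(s) − α(t)| ≥ |s − t|/2. -/
/-!
On `[t, s]` the remainder `f r - f t - (r - t) • f' t` has derivative `f' r - f' t`, of norm at most
`Λ (r - t)`, so it stays below `Λ/2 (r - t)²`. Since `‖f' t‖ = 1`, the reverse triangle inequality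
turns this into `‖f s - f t‖ ≥ (s - t) - Λ/2 (s - t)²`, and for `Λ |s - t| ≤ 1` the quadratic term
is at most half the linear one.
-/

open Set

section

variable {E : Type*} [NormedAddCommGroup E] [NormedSpace ℝ E] {f f' : ℝ → E} {Λ s t : ℝ}

theorem norm_sub_sub_smul_le_of_norm_deriv_sub_le (hts : t ≤ s)
    (hf : ∀ r ∈ Icc t s, HasDerivAt f (f' r) r)
    (hlip : ∀ r ∈ Icc t s, ‖f' r - f' t‖ ≤ Λ * (r - t)) :
    ‖f s - f t - (s - t) • f' t‖ ≤ Λ / 2 * (s - t) ^ 2 := by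
  have hrem : ∀ r ∈ Icc t s,
      HasDerivAt (fun r => f r - f t - (r - t) • f' t) (f' r - f' t) r := fun r hr => by
    simpa using ((hf r hr).sub_const (f t)).fun_sub
      (((hasDerivAt_id' r).sub_const t).smul_const (f' t))
  have hbound : ∀ r, HasDerivAt (fun r => Λ / 2 * (r - t) ^ 2) (Λ * (r - t)) r := fun r =>
    ((((hasDerivAt_id' r).sub_const t).fun_pow 2).const_mul (Λ / 2)).congr_deriv (by ring)
  refine image_norm_le_of_norm_deriv_right_le_deriv_boundary
    (fun r hr => (hrem r hr).continuousAt.continuousWithinAt)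
    (fun r hr => (hrem r (Ico_subset_Icc_self hr)).hasDerivWithinAt)
    (by simp) hbound (fun r hr => hlip r (Ico_subset_Icc_self hr)) ⟨hts, le_rfl⟩

theorem sub_sub_le_norm_sub_of_norm_deriv_sub_le (hts : t ≤ s)
    (hf : ∀ r ∈ Icc t s, HasDerivAt f (f' r) r) (hunit : ‖f' t‖ = 1)
    (hlip : ∀ r ∈ Icc t s, ‖f' r - f' t‖ ≤ Λ * (r - t)) :
    (s - t) - Λ / 2 * (s - t) ^ 2 ≤ ‖f s - f t‖ := by
  have hrem := norm_sub_sub_smul_le_of_norm_deriv_sub_le hts hf hlip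
  have hlin : ‖(s - t) • f' t‖ = s - t := by
    rw [norm_smul, hunit, mul_one, Real.norm_of_nonneg (sub_nonneg.2 hts)]
  have htri : s - t ≤ ‖f s - f t‖ + ‖f s - f t - (s - t) • f' t‖ := calc
    s - t = ‖(f s - f t) - (f s - f t - (s - t) • f' t)‖ := by rw [sub_sub_cancel, hlin]
    _ ≤ ‖f s - f t‖ + ‖f s - f t - (s - t) • f' t‖ := norm_sub_le _ _
  linarith

end

/-- A unit-speed curve with Lipschitz derivative (constant `Λ`) satisfies
`‖α s - α t‖ ≥ |s - t| - (Λ/2)|s - t|²` for `|s - t| ≤ 1/Λ`, hence `‖α s - α t‖ ≥ |s - t|/2`. -/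
theorem stmt_0 (n : ℕ) (ℓ Λ : ℝ) (hΛ : 0 < Λ)
    (α α' : ℝ → EuclideanSpace ℝ (Fin n))
    (hderiv : ∀ t ∈ Icc 0 ℓ, HasDerivAt α (α' t) t)
    (hunit : ∀ t ∈ Icc 0 ℓ, ‖α' t‖ = 1)
    (hlip : ∀ s ∈ Icc 0 ℓ, ∀ t ∈ Icc 0 ℓ, ‖α' s - α' t‖ ≤ Λ * |s - t|) :
    ∀ s ∈ Icc 0 ℓ, ∀ t ∈ Icc 0 ℓ, |s - t| ≤ 1 / Λ →
      |s - t| - Λ / 2 * |s - t| ^ 2 ≤ ‖α s - α t‖ ∧ |s - t| / 2 ≤ ‖α s - α t‖ := by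
  have hordered : ∀ s ∈ Icc 0 ℓ, ∀ t ∈ Icc 0 ℓ, t ≤ s →
      |s - t| - Λ / 2 * |s - t| ^ 2 ≤ ‖α s - α t‖ := fun s hs t ht hts => by
    have hsub : Icc t s ⊆ Icc 0 ℓ := Icc_subset_Icc ht.1 hs.2
    rw [abs_of_nonneg (sub_nonneg.2 hts)]
    refine sub_sub_le_norm_sub_of_norm_deriv_sub_le hts (fun r hr => hderiv r (hsub hr))
      (hunit t ht) fun r hr => ?_
    simpa [abs_of_nonneg (sub_nonneg.2 hr.1)] using hlip r (hsub hr) t ht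
  intro s hs t ht hst
  have hquad : |s - t| - Λ / 2 * |s - t| ^ 2 ≤ ‖α s - α t‖ := by
    rcases le_total t s with hts | hst'
    · exact hordered s hs t ht hts
    · simpa only [abs_sub_comm, norm_sub_rev] using hordered t ht s hs hst'
  have hsmall : Λ * |s - t| ≤ 1 := by rwa [← le_div_iff₀' hΛ]
  exact ⟨hquad, by nlinarith [abs_nonneg (s - t)]⟩
end

section
/- Let α : ℝ → ℝⁿ be an ℓ-periodic C² unit-speed curve with ℓ > 0, and suppose |α''(t)| ≤ Λ for all t, where Λ > 0. Then the diameter of the image of α is at least 1/Λ. -/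
/-!
For a closed curve, integration by parts gives
`∫₀^ℓ ‖α'‖² = -∫₀^ℓ ⟪α t - α 0, α'' t⟫ ≤ Λ ℓ sup_t ‖α t - α 0‖ ≤ Λ ℓ diam (range α)`,
and for a unit-speed curve the left-hand side is `ℓ`.
-/

open intervalIntegral Set
open scoped RealInnerProductSpace

section ClosedCurve

variable {E : Type*} [NormedAddCommGroup E] [InnerProductSpace ℝ E]

/-- The boundary term `t ↦ ⟪α t - α a, α' t⟫` vanishes at both ends of a closed curve. -/
theorem integral_inner_sub_deriv_deriv_eq_neg_integral_norm_deriv_sq {α : ℝ → E} {a b : ℝ}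
    (hα : ContDiff ℝ 2 α) (hclosed : α b = α a) :
    ∫ t in a..b, ⟪α t - α a, deriv (deriv α) t⟫ = -∫ t in a..b, ‖deriv α t‖ ^ 2 := by
  have hα' : ContDiff ℝ 1 (deriv α) :=
    (contDiff_succ_iff_deriv.mp (show ContDiff ℝ (1 + 1) α from hα)).2.2
  have hα'' : Continuous (deriv (deriv α)) :=
    (contDiff_succ_iff_deriv.mp (show ContDiff ℝ (0 + 1) (deriv α) from hα')).2.2.continuous
  have hderiv : ∀ t, HasDerivAt (fun s ↦ ⟪α s - α a, deriv α s⟫)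
      (‖deriv α t‖ ^ 2 + ⟪α t - α a, deriv (deriv α) t⟫) t := fun t ↦ by
    have := ((hα.differentiable two_ne_zero t).hasDerivAt.sub_const (α a)).inner ℝ
      (hα'.differentiable one_ne_zero t).hasDerivAt
    rwa [real_inner_self_eq_norm_sq, add_comm] at this
  have hint₁ : IntervalIntegrable (fun t ↦ ‖deriv α t‖ ^ 2) MeasureTheory.volume a b :=
    (hα'.continuous.norm.pow 2).intervalIntegrable a b
  have hint₂ : IntervalIntegrable (fun t ↦ ⟪α t - α a, deriv (deriv α) t⟫)
      MeasureTheory.volume a b :=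
    ((hα.continuous.sub continuous_const).inner hα'').intervalIntegrable a b
  have hftc := integral_eq_sub_of_hasDerivAt (fun t _ ↦ hderiv t) (hint₁.add hint₂)
  rw [integral_add hint₁ hint₂] at hftc
  simp only [hclosed, sub_self, inner_zero_left] at hftc
  linarith

theorem integral_norm_deriv_sq_le_of_closed {α : ℝ → E} {a b R Λ : ℝ} (hab : a ≤ b)
    (hα : ContDiff ℝ 2 α) (hclosed : α b = α a)
    (hR : ∀ t ∈ Icc a b, ‖α t - α a‖ ≤ R) (hcurv : ∀ t ∈ Icc a b, ‖deriv (deriv α) t‖ ≤ Λ) :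
    ∫ t in a..b, ‖deriv α t‖ ^ 2 ≤ R * Λ * (b - a) := by
  have hR₀ : 0 ≤ R := (norm_nonneg _).trans (hR a (left_mem_Icc.mpr hab))
  have hbound : ∀ t ∈ uIoc a b, ‖⟪α t - α a, deriv (deriv α) t⟫‖ ≤ R * Λ := fun t ht ↦ by
    rw [uIoc_of_le hab] at ht
    exact (norm_inner_le_norm _ _).trans
      (mul_le_mul (hR t (Ioc_subset_Icc_self ht)) (hcurv t (Ioc_subset_Icc_self ht))
        (norm_nonneg _) hR₀)
  calc ∫ t in a..b, ‖deriv α t‖ ^ 2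
      = -∫ t in a..b, ⟪α t - α a, deriv (deriv α) t⟫ := by
        rw [integral_inner_sub_deriv_deriv_eq_neg_integral_norm_deriv_sq hα hclosed, neg_neg]
    _ ≤ ‖∫ t in a..b, ⟪α t - α a, deriv (deriv α) t⟫‖ := neg_le_abs _
    _ ≤ R * Λ * |b - a| := norm_integral_le_of_norm_le_const hbound
    _ = R * Λ * (b - a) := by rw [abs_of_nonneg (sub_nonneg.mpr hab)]

end ClosedCurve

theorem stmt_2_general (n : ℕ) (ℓ Λ : ℝ) (hℓ : 0 < ℓ)
    (α : ℝ → EuclideanSpace ℝ (Fin n))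
    (hper : Function.Periodic α ℓ)
    (hC2 : ContDiff ℝ 2 α)
    (hunit : ∀ t, ‖deriv α t‖ = 1)
    (hcurv : ∀ t, ‖deriv (deriv α) t‖ ≤ Λ) :
    1 / Λ ≤ Metric.diam (Set.range α) := by
  set D := Metric.diam (range α)
  have hbdd : Bornology.IsBounded (range α) :=
    (hper.compact_of_continuous hℓ.ne' hC2.continuous).isBounded
  have hR : ∀ t ∈ Icc 0 ℓ, ‖α t - α 0‖ ≤ D := fun t _ ↦ by
    rw [← dist_eq_norm]
    exact Metric.dist_le_diam_of_mem hbdd (mem_range_self t) (mem_range_self 0)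
  have hlength : ∫ t in (0 : ℝ)..ℓ, ‖deriv α t‖ ^ 2 = ℓ := by simp [hunit]
  have key := integral_norm_deriv_sq_le_of_closed hℓ.le hC2 (by simpa using hper 0) hR
    (fun t _ ↦ hcurv t)
  rw [hlength, sub_zero] at key
  have hDΛ : 1 ≤ D * Λ := le_of_mul_le_mul_right (by rwa [one_mul]) hℓ
  have hΛ : 0 < Λ := pos_of_mul_pos_right (by linarith) Metric.diam_nonneg
  rw [div_le_iff₀ hΛ]
  exact hDΛ

/-- A periodic `C²` unit-speed curve with curvature bounded by `Λ` has diameter at least `1/Λ`. -/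
theorem stmt_2 (n : ℕ) (ℓ Λ : ℝ) (hℓ : 0 < ℓ) (hΛ : 0 < Λ)
    (α : ℝ → EuclideanSpace ℝ (Fin n))
    (hper : Function.Periodic α ℓ)
    (hC2 : ContDiff ℝ 2 α)
    (hunit : ∀ t, ‖deriv α t‖ = 1)
    (hcurv : ∀ t, ‖deriv (deriv α) t‖ ≤ Λ) :
    1 / Λ ≤ Metric.diam (Set.range α) :=
  stmt_2_general n ℓ Λ hℓ α hper hC2 hunit hcurv
end

section
/- Let π₁, π₂, π₁⁰, π₂⁰, M₁, M₂, N₁, N₂ be continuous linear endomorphisms of ℝⁿ satisfying, for i = 1, 2: πᵢ⁰ Mᵢ = Mᵢ = Mᵢ πᵢ, πᵢ Nᵢ = Nᵢ = Nᵢ πᵢ⁰, Nᵢ Mᵢ πᵢ = πᵢ, and Mᵢ Nᵢ πᵢ⁰ = πᵢ⁰. Then 2‖M₁ − M₂‖ ≤ 2‖M₁‖‖M₂‖‖N₂ − N₁‖ + ‖M₁ + M₂‖(‖π₂ − π₁‖ + ‖π₂⁰ − π₁⁰‖), where ‖·‖ denotes the operator norm. -/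
/-!
Writing `Mᵢ Nᵢ = ρᵢ` and `Nᵢ Mᵢ = πᵢ`, the operator identity
`2 (M₁ - M₂) = M₁ (N₂ - N₁) M₂ + M₂ (N₂ - N₁) M₁ - (M₁ + M₂)(π₂ - π₁) - (ρ₂ - ρ₁)(M₁ + M₂)`
holds by expanding both sides; the inequality is the triangle inequality and submultiplicativity
of the norm applied to the right-hand side.
-/

theorem mul_eq_of_mul_mul_eq {S : Type*} [Semigroup S] {N M π : S}
    (hM : M * π = M) (h : N * M * π = π) : N * M = π := by
  rw [← h, mul_assoc, hM]

theorem two_nsmul_sub_eq_of_mul_eq {R : Type*} [Ring R] {π₁ π₂ ρ₁ ρ₂ M₁ M₂ N₁ N₂ : R}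
    (hρM₁ : ρ₁ * M₁ = M₁) (hMπ₁ : M₁ * π₁ = M₁) (hρM₂ : ρ₂ * M₂ = M₂) (hMπ₂ : M₂ * π₂ = M₂)
    (hNM₁ : N₁ * M₁ = π₁) (hNM₂ : N₂ * M₂ = π₂) (hMN₁ : M₁ * N₁ = ρ₁) (hMN₂ : M₂ * N₂ = ρ₂) :
    2 • (M₁ - M₂) = M₁ * (N₂ - N₁) * M₂ + M₂ * (N₂ - N₁) * M₁
      - (M₁ + M₂) * (π₂ - π₁) - (ρ₂ - ρ₁) * (M₁ + M₂) := by
  have h₁₂ : M₁ * (N₂ - N₁) * M₂ = M₁ * π₂ - ρ₁ * M₂ := by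
    rw [mul_sub, sub_mul, mul_assoc, hNM₂, hMN₁]
  have h₂₁ : M₂ * (N₂ - N₁) * M₁ = ρ₂ * M₁ - M₂ * π₁ := by
    rw [mul_sub, sub_mul, mul_assoc M₂ N₁, hNM₁, hMN₂]
  rw [h₁₂, h₂₁]
  simp only [mul_add, add_mul, mul_sub, sub_mul, hρM₁, hMπ₁, hρM₂, hMπ₂]
  abel

theorem two_mul_norm_sub_le {R : Type*} [NormedRing R] [NormedSpace ℝ R]
    {π₁ π₂ ρ₁ ρ₂ M₁ M₂ N₁ N₂ : R}
    (hρM₁ : ρ₁ * M₁ = M₁) (hMπ₁ : M₁ * π₁ = M₁) (hρM₂ : ρ₂ * M₂ = M₂) (hMπ₂ : M₂ * π₂ = M₂)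
    (hNρ₁ : N₁ * ρ₁ = N₁) (hNρ₂ : N₂ * ρ₂ = N₂)
    (hNMπ₁ : N₁ * M₁ * π₁ = π₁) (hNMπ₂ : N₂ * M₂ * π₂ = π₂)
    (hMNρ₁ : M₁ * N₁ * ρ₁ = ρ₁) (hMNρ₂ : M₂ * N₂ * ρ₂ = ρ₂) :
    2 * ‖M₁ - M₂‖ ≤ 2 * ‖M₁‖ * ‖M₂‖ * ‖N₂ - N₁‖ +
      ‖M₁ + M₂‖ * (‖π₂ - π₁‖ + ‖ρ₂ - ρ₁‖) := by
  have key := two_nsmul_sub_eq_of_mul_eq hρM₁ hMπ₁ hρM₂ hMπ₂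
    (mul_eq_of_mul_mul_eq hMπ₁ hNMπ₁) (mul_eq_of_mul_mul_eq hMπ₂ hNMπ₂)
    (mul_eq_of_mul_mul_eq hNρ₁ hMNρ₁) (mul_eq_of_mul_mul_eq hNρ₂ hMNρ₂)
  have hnorm : ‖2 • (M₁ - M₂)‖ = 2 * ‖M₁ - M₂‖ := by
    rw [RCLike.norm_nsmul ℝ, nsmul_eq_mul, Nat.cast_ofNat]
  calc 2 * ‖M₁ - M₂‖
      = ‖M₁ * (N₂ - N₁) * M₂ + M₂ * (N₂ - N₁) * M₁
          - (M₁ + M₂) * (π₂ - π₁) - (ρ₂ - ρ₁) * (M₁ + M₂)‖ := by rw [← hnorm, key]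
    _ ≤ ‖M₁ * (N₂ - N₁) * M₂‖ + ‖M₂ * (N₂ - N₁) * M₁‖
          + ‖(M₁ + M₂) * (π₂ - π₁)‖ + ‖(ρ₂ - ρ₁) * (M₁ + M₂)‖ :=
      (norm_sub_le _ _).trans <| add_le_add_left
        ((norm_sub_le _ _).trans <| add_le_add_left (norm_add_le _ _) _) _
    _ ≤ ‖M₁‖ * ‖N₂ - N₁‖ * ‖M₂‖ + ‖M₂‖ * ‖N₂ - N₁‖ * ‖M₁‖
          + ‖M₁ + M₂‖ * ‖π₂ - π₁‖ + ‖ρ₂ - ρ₁‖ * ‖M₁ + M₂‖ := by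
      gcongr
      exacts [norm_mul₃_le, norm_mul₃_le, norm_mul_le _ _, norm_mul_le _ _]
    _ = 2 * ‖M₁‖ * ‖M₂‖ * ‖N₂ - N₁‖ + ‖M₁ + M₂‖ * (‖π₂ - π₁‖ + ‖ρ₂ - ρ₁‖) := by ring

theorem stmt_6_general (n : ℕ)
    (π₁ π₂ ρ₁ ρ₂ M₁ M₂ N₁ N₂ :
      EuclideanSpace ℝ (Fin n) →L[ℝ] EuclideanSpace ℝ (Fin n))
    (h1 : ρ₁.comp M₁ = M₁) (h1' : M₁.comp π₁ = M₁)
    (h2 : ρ₂.comp M₂ = M₂) (h2' : M₂.comp π₂ = M₂)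
    (h3' : N₁.comp ρ₁ = N₁)
    (h4' : N₂.comp ρ₂ = N₂)
    (h5 : (N₁.comp M₁).comp π₁ = π₁) (h6 : (N₂.comp M₂).comp π₂ = π₂)
    (h7 : (M₁.comp N₁).comp ρ₁ = ρ₁) (h8 : (M₂.comp N₂).comp ρ₂ = ρ₂) :
    2 * ‖M₁ - M₂‖ ≤ 2 * ‖M₁‖ * ‖M₂‖ * ‖N₂ - N₁‖ +
      ‖M₁ + M₂‖ * (‖π₂ - π₁‖ + ‖ρ₂ - ρ₁‖) := by
  simp only [← ContinuousLinearMap.mul_def] at h1 h1' h2 h2' h3' h4' h5 h6 h7 h8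
  exact two_mul_norm_sub_le h1 h1' h2 h2' h3' h4' h5 h6 h7 h8

/-- The algebraic operator-norm inequality used to prove Hölder continuity of the
derivative of an inverse map. Here `ρ₁, ρ₂` play the role of `π₁⁰, π₂⁰`. -/
theorem stmt_6 (n : ℕ)
    (π₁ π₂ ρ₁ ρ₂ M₁ M₂ N₁ N₂ :
      EuclideanSpace ℝ (Fin n) →L[ℝ] EuclideanSpace ℝ (Fin n))
    (h1 : ρ₁.comp M₁ = M₁) (h1' : M₁.comp π₁ = M₁)
    (h2 : ρ₂.comp M₂ = M₂) (h2' : M₂.comp π₂ = M₂)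
    (h3 : π₁.comp N₁ = N₁) (h3' : N₁.comp ρ₁ = N₁)
    (h4 : π₂.comp N₂ = N₂) (h4' : N₂.comp ρ₂ = N₂)
    (h5 : (N₁.comp M₁).comp π₁ = π₁) (h6 : (N₂.comp M₂).comp π₂ = π₂)
    (h7 : (M₁.comp N₁).comp ρ₁ = ρ₁) (h8 : (M₂.comp N₂).comp ρ₂ = ρ₂) :
    2 * ‖M₁ - M₂‖ ≤ 2 * ‖M₁‖ * ‖M₂‖ * ‖N₂ - N₁‖ +
      ‖M₁ + M₂‖ * (‖π₂ - π₁‖ + ‖ρ₂ - ρ₁‖) :=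
  stmt_6_general n π₁ π₂ ρ₁ ρ₂ M₁ M₂ N₁ N₂ h1 h1' h2 h2' h3' h4' h5 h6 h7 h8
end
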